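/- Let (X, μ) be a probability measure space, A ⊆ X a measurable set with μ(A) ≥ 1/2, and d : X × X → ℝ a nonnegative measurable function. If ∫∫_{X×X} exp(d(z,z')/C) dμ(z) dμ(z') ≤ C' for constants C > 0, C' ≥ 1, then ∫_X exp((1/(2C)) · inf_{z'∈A} d(z,z')) dμ(z) ≤ 2·C'. (Here infimum over A of d(z,·) is assumed measurable.) -/
import Mathlib


open MeasureTheory ENNReal

/-- Jensen-type bound: exponential integrability of a two-point
distance function implies exponential integrability (at halved rate) of the
infimum distance to a set of measure at least one half. -/
theorem stmt_0 {X : Type*} [MeasurableSpace X] (μ : Measure X) [IsProbabilityMeasure μ]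
    (A : Set X) (hA : MeasurableSet A) (hAhalf : (1 : ℝ≥0∞) / 2 ≤ μ A)
    (d : X → X → ℝ) (hd0 : ∀ z z', 0 ≤ d z z')
    (hdmeas : Measurable (Function.uncurry d))
    (C C' : ℝ) (hC : 0 < C) (hC' : 1 ≤ C')
    (hint : ∫⁻ z, ∫⁻ z', ENNReal.ofReal (Real.exp (d z z' / C)) ∂μ ∂μ ≤ ENNReal.ofReal C')
    (hinfmeas : Measurable fun z => ⨅ z' : A, d z (z' : X)) :
    ∫⁻ z, ENNReal.ofReal (Real.exp ((1 / (2 * C)) * ⨅ z' : A, d z (z' : X))) ∂μ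
      ≤ ENNReal.ofReal (2 * C') := by
  have hAne : A.Nonempty := by
    rcases A.eq_empty_or_nonempty with h | h
    · subst h; simp at hAhalf
    · exact h
  haveI : Nonempty A := hAne.to_subtype
  set f : X → ℝ := fun z => ⨅ z' : A, d z (z' : X) with hf
  have hf0 : ∀ z, 0 ≤ f z := fun z => le_ciInf fun z' => hd0 z z'
  have hbdd : ∀ z, BddBelow (Set.range fun z' : A => d z (z' : X)) :=
    fun z => ⟨0, by rintro x ⟨a, rfl⟩; exact hd0 z a⟩
  have hfle : ∀ z, ∀ z' ∈ A, f z ≤ d z z' := fun z z' hz' =>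
    ciInf_le (hbdd z) (⟨z', hz'⟩ : A)
  have key : ∀ z, ENNReal.ofReal (Real.exp ((1 / (2 * C)) * f z)) ≤
      2 * ∫⁻ z', ENNReal.ofReal (Real.exp (d z z' / C)) ∂μ := by
    intro z
    set c : ℝ≥0∞ := ENNReal.ofReal (Real.exp ((1 / (2 * C)) * f z)) with hc
    have h1 : c * μ A ≤ ∫⁻ z' in A, ENNReal.ofReal (Real.exp (d z z' / C)) ∂μ := by
      rw [← setLIntegral_const A c]
      apply setLIntegral_mono
      · exact (ENNReal.measurable_ofReal.comp
          (Real.measurable_exp.comp ((hdmeas.comp (measurable_prodMk_left)).div_const C)))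
      · intro z' hz'
        apply ENNReal.ofReal_le_ofReal
        apply Real.exp_le_exp.2
        have h2 : (1 / (2 * C)) * f z ≤ (1 / C) * f z := by
          apply mul_le_mul_of_nonneg_right _ (hf0 z)
          rw [div_le_div_iff₀ (by positivity) hC]
          nlinarith
        have h3 : (1 / C) * f z ≤ (1 / C) * d z z' :=
          mul_le_mul_of_nonneg_left (hfle z z' hz') (by positivity)
        calc (1 / (2 * C)) * f z ≤ (1 / C) * d z z' := h2.trans h3
          _ = d z z' / C := by ring
    have h2 : c * (1 / 2) ≤ ∫⁻ z', ENNReal.ofReal (Real.exp (d z z' / C)) ∂μ :=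
      le_trans (mul_le_mul_right hAhalf c)
        (h1.trans (setLIntegral_le_lintegral A _))
    calc c = 2 * (c * (1 / 2)) := by
          rw [mul_comm c, ← mul_assoc, one_div,
            ENNReal.mul_inv_cancel two_ne_zero (by norm_num), one_mul]
      _ ≤ 2 * _ := mul_le_mul_right h2 2
  calc ∫⁻ z, ENNReal.ofReal (Real.exp ((1 / (2 * C)) * f z)) ∂μ
      ≤ ∫⁻ z, 2 * ∫⁻ z', ENNReal.ofReal (Real.exp (d z z' / C)) ∂μ ∂μ :=
        lintegral_mono key
    _ = 2 * ∫⁻ z, ∫⁻ z', ENNReal.ofReal (Real.exp (d z z' / C)) ∂μ ∂μ :=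
        lintegral_const_mul' 2 _ (by norm_num)
    _ ≤ 2 * ENNReal.ofReal C' := mul_le_mul_right hint 2
    _ = ENNReal.ofReal (2 * C') := by
        rw [ENNReal.ofReal_mul (by norm_num)]
        norm_num
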